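/- Let L be the x-axis in the Heisenberg group, p = (0,y,z), p_L = (0,0,z), and let P_L(p) = (0,0,0) be the point of L below p_L. Then d(p, P_L(p)) ≤ 4 d(p, L). -/

import Mathlib

/-- The Heisenberg group as `ℝ × ℝ × ℝ`. -/
abbrev H : Type := ℝ × ℝ × ℝ

/-- Heisenberg group multiplication. -/
def Hmul (a b : H) : H :=
  (a.1 + b.1, a.2.1 + b.2.1, a.2.2 + b.2.2 + 2 * (a.1 * b.2.1 - b.1 * a.2.1))

/-- Heisenberg group inverse. -/
def Hinv (a : H) : H := (-a.1, -a.2.1, -a.2.2)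

/-- The Koranyi norm. -/
noncomputable def KN (a : H) : ℝ :=
  ((a.1 ^ 2 + a.2.1 ^ 2) ^ 2 + a.2.2 ^ 2) ^ ((1 : ℝ) / 4)

/-- The Koranyi distance. -/
noncomputable def Hd (a b : H) : ℝ := KN (Hmul (Hinv a) b)

/-- Distance from a point to a set. -/
noncomputable def distSet (p : H) (L : Set H) : ℝ := sInf {r : ℝ | ∃ q ∈ L, r = Hd p q}

/-- The x-axis, a horizontal line. -/
def xAxis : Set H := {q : H | ∃ t : ℝ, q = (t, 0, 0)}

/-- A general horizontal line through `g` with horizontal direction `v`. -/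
def horizLine (g : H) (v : ℝ × ℝ) : Set H :=
  {q : H | ∃ t : ℝ, q = Hmul g (t * v.1, t * v.2, 0)}

/-- The non-horizontality `NH(g) = N(g⁻¹ · π̃(g))`. -/
noncomputable def NH (g : H) : ℝ := KN (Hmul (Hinv g) (g.1, g.2.1, 0))

/-! For `q = (t, 0, 0)` on the x-axis, `d(p, 0)⁴ = y⁴ + z²` and `d(p, q)⁴ = (t² + y²)² + (z - 2ty)²`.
Since `|z| ≤ |z - 2ty| + 2|ty| ≤ |z - 2ty| + (t² + y²)`, the former is at most three times the latter,
so in fact `d(p, 0) ≤ 3^{1/4} d(p, L)`. -/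

lemma Hd_nonneg (a b : H) : 0 ≤ Hd a b := by
  unfold Hd KN
  positivity

lemma KN_pow_four (a : H) : KN a ^ 4 = (a.1 ^ 2 + a.2.1 ^ 2) ^ 2 + a.2.2 ^ 2 := by
  rw [KN, ← Real.rpow_natCast, ← Real.rpow_mul (by positivity)]
  norm_num

lemma le_distSet {p : H} {L : Set H} {r : ℝ} (hL : L.Nonempty) (h : ∀ q ∈ L, r ≤ Hd p q) :
    r ≤ distSet p L := by
  obtain ⟨q, hq⟩ := hL
  refine le_csInf ⟨_, q, hq, rfl⟩ ?_
  rintro _ ⟨q, hq, rfl⟩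
  exact h q hq

lemma pow_four_add_sq_le_three_mul (t y z : ℝ) :
    y ^ 4 + z ^ 2 ≤ 3 * ((t ^ 2 + y ^ 2) ^ 2 + (z - 2 * t * y) ^ 2) := by
  nlinarith [sq_nonneg (z - 4 * t * y), sq_nonneg (t ^ 2 - y ^ 2), sq_nonneg (t ^ 2),
    mul_nonneg (sq_nonneg t) (sq_nonneg y)]

lemma Hd_zero_pow_four_le (t y z : ℝ) :
    Hd ((0 : ℝ), y, z) ((0 : ℝ), (0 : ℝ), (0 : ℝ)) ^ 4
      ≤ 3 * Hd ((0 : ℝ), y, z) (t, (0 : ℝ), (0 : ℝ)) ^ 4 := by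
  simp only [Hd, KN_pow_four, Hmul, Hinv]
  convert pow_four_add_sq_le_three_mul t y z using 2 <;> ring

/-- For p = (0,y,z) and L the x-axis, P_L(p) = (0,0,0) and
d(p, P_L(p)) is at most 4 d(p, L). -/
theorem dist_to_projection_le (y z : ℝ) :
    Hd ((0 : ℝ), y, z) ((0 : ℝ), (0 : ℝ), (0 : ℝ)) ≤ 4 * distSet ((0 : ℝ), y, z) xAxis := by
  suffices h : Hd ((0 : ℝ), y, z) ((0 : ℝ), (0 : ℝ), (0 : ℝ)) / 4 ≤ distSet ((0 : ℝ), y, z) xAxis by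
    linarith
  refine le_distSet ⟨_, 0, rfl⟩ ?_
  rintro _ ⟨t, rfl⟩
  have hd := Hd_nonneg ((0 : ℝ), y, z) (t, (0 : ℝ), (0 : ℝ))
  rw [div_le_iff₀ four_pos, ← pow_le_pow_iff_left₀ (Hd_nonneg _ _) (by positivity) four_ne_zero]
  calc Hd ((0 : ℝ), y, z) ((0 : ℝ), (0 : ℝ), (0 : ℝ)) ^ 4
      ≤ 3 * Hd ((0 : ℝ), y, z) (t, (0 : ℝ), (0 : ℝ)) ^ 4 := Hd_zero_pow_four_le t y z
    _ ≤ (Hd ((0 : ℝ), y, z) (t, (0 : ℝ), (0 : ℝ)) * 4) ^ 4 := by nlinarith [pow_nonneg hd 4]
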